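/- Let h : ℝ → ℝ be a nonnegative locally integrable function and ω > 0. Then sup_{t ≥ 0} ∫_0^t e^{-ω(t-s)} h(s) ds ≤ (1 - e^{-ω})^{-1} · sup_{t ≥ 0} ∫_t^{t+1} h(s) ds. -/
import Mathlib


open MeasureTheory Real

/-- For a nonnegative locally integrable `h` on `[0,∞)` and `ω > 0`,
`sup_{t ≥ 0} ∫_0^t e^{-ω(t-s)} h(s) ds ≤ (1 - e^{-ω})⁻¹ · sup_{t ≥ 0} ∫_t^{t+1} h`. -/
theorem stmt1 (h : ℝ → ℝ) (ω M : ℝ) (hω : 0 < ω)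
    (hnn : ∀ s, 0 ≤ h s)
    (hloc : LocallyIntegrable h volume)
    (hM : ∀ t : ℝ, 0 ≤ t → ∫ y in t..(t + 1), h y ≤ M) :
    ∀ t : ℝ, 0 ≤ t →
      ∫ s in (0:ℝ)..t, Real.exp (-ω * (t - s)) * h s ≤ (1 - Real.exp (-ω))⁻¹ * M := by
  have hE : Real.exp (-ω) < 1 := by
    rw [Real.exp_lt_one_iff]; linarith
  have hE0 : 0 < Real.exp (-ω) := Real.exp_pos _
  have hden : 0 < 1 - Real.exp (-ω) := by linarith
  set C : ℝ := (1 - Real.exp (-ω))⁻¹ * M with hC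
  have hM0 : 0 ≤ M := by
    have h1 := hM 0 le_rfl
    have h2 : (0:ℝ) ≤ ∫ y in (0:ℝ)..(0 + 1), h y :=
      intervalIntegral.integral_nonneg (by norm_num) (fun x _ => hnn x)
    linarith
  have hCM : (1 - Real.exp (-ω)) * C = M := by
    rw [hC]; field_simp
  have hMC : M ≤ C := by nlinarith
  have hInt : ∀ a b : ℝ, IntervalIntegrable h volume a b := fun a b =>
    (hloc.integrableOn_isCompact isCompact_uIcc).intervalIntegrable
  have hint : ∀ a b t : ℝ,
      IntervalIntegrable (fun s => Real.exp (-ω * (t - s)) * h s) volume a b := by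
    intro a b t
    exact (hInt a b).continuousOn_mul (by fun_prop)
  have hmono : ∀ a t : ℝ, a ≤ t →
      ∫ s in a..t, Real.exp (-ω * (t - s)) * h s ≤ ∫ s in a..t, h s := by
    intro a t hat
    apply intervalIntegral.integral_mono_on hat (hint a t t) (hInt a t)
    intro x hx
    have hx2 : Real.exp (-ω * (t - x)) ≤ 1 := by
      rw [Real.exp_le_one_iff]
      nlinarith [hx.1, hx.2]
    nlinarith [hnn x]
  have key : ∀ n : ℕ, ∀ t : ℝ, 0 ≤ t → t ≤ n + 1 →
      ∫ s in (0:ℝ)..t, Real.exp (-ω * (t - s)) * h s ≤ C := by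
    intro n
    induction n with
    | zero =>
      intro t ht0 ht1
      push_cast at ht1
      replace ht1 : t ≤ 1 := by linarith
      calc ∫ s in (0:ℝ)..t, Real.exp (-ω * (t - s)) * h s
          ≤ ∫ s in (0:ℝ)..t, h s := hmono 0 t ht0
        _ ≤ ∫ s in (0:ℝ)..(0 + 1), h s := by
            apply intervalIntegral.integral_mono_interval le_rfl ht0 (by linarith)
            · filter_upwards with x using hnn x
            · exact hInt 0 (0 + 1)
        _ ≤ M := hM 0 le_rfl
        _ ≤ C := hMC
    | succ n ih =>
      intro t ht0 htn
      by_cases hle : t ≤ n + 1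
      · exact ih t ht0 hle
      push_neg at hle
      have ht1 : 1 ≤ t := by
        have : (0:ℝ) ≤ (n : ℝ) := Nat.cast_nonneg n
        linarith
      have hsplit : ∫ s in (0:ℝ)..t, Real.exp (-ω * (t - s)) * h s
          = (∫ s in (0:ℝ)..(t - 1), Real.exp (-ω * (t - s)) * h s)
            + ∫ s in (t - 1)..t, Real.exp (-ω * (t - s)) * h s :=
        (intervalIntegral.integral_add_adjacent_intervals (hint 0 (t - 1) t)
          (hint (t - 1) t t)).symm
      have h2 : ∫ s in (0:ℝ)..(t - 1), Real.exp (-ω * (t - s)) * h s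
          = Real.exp (-ω) * ∫ s in (0:ℝ)..(t - 1), Real.exp (-ω * ((t - 1) - s)) * h s := by
        rw [← intervalIntegral.integral_const_mul]
        apply intervalIntegral.integral_congr
        intro x _
        simp only
        rw [← mul_assoc, ← Real.exp_add]
        congr 1
        ring_nf
      have h3 : ∫ s in (0:ℝ)..(t - 1), Real.exp (-ω * ((t - 1) - s)) * h s ≤ C := by
        apply ih (t - 1) (by linarith)
        push_cast at htn ⊢
        linarith
      have h4 : ∫ s in (t - 1)..t, Real.exp (-ω * (t - s)) * h s ≤ M := by
        refine (hmono (t - 1) t (by linarith)).trans ?_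
        have := hM (t - 1) (by linarith)
        simpa using this
      calc ∫ s in (0:ℝ)..t, Real.exp (-ω * (t - s)) * h s
          = Real.exp (-ω) * (∫ s in (0:ℝ)..(t - 1), Real.exp (-ω * ((t - 1) - s)) * h s)
            + ∫ s in (t - 1)..t, Real.exp (-ω * (t - s)) * h s := by rw [hsplit, h2]
        _ ≤ Real.exp (-ω) * C + M :=
            add_le_add (mul_le_mul_of_nonneg_left h3 hE0.le) h4
        _ = C := by nlinarith
  intro t ht0
  obtain ⟨n, hn⟩ := exists_nat_ge t
  exact key n t ht0 (by linarith)
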